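/- The Brauer-Picard multiplication of Vec(Z/p) is associative: Let p be prime and let BP be the free Z-module with basis {T, L, R, F0} ∪ {X_k : k ∈ (Z/p)ˣ} ∪ {F_q : q ∈ (Z/p)ˣ}, with bilinear multiplication defined on basis elements by: T·T = p·T, T·L = T, T·R = p·R, T·F0 = R, T·X_l = T, T·F_r = R; L·T = p·L, L·L = L, L·R = p·F0, L·F0 = F0, L·X_l = L, L·F_r = F0; R·T = T, R·L = p·T, R·R = R, R·F0 = p·R, R·X_l = R, R·F_r = T; F0·T = L, F0·L = p·L, F0·R = F0, F0·F0 = p·F0, F0·X_l = F0, F0·F_r = L; X_k·T = T, X_k·L = L, X_k·R = R, X_k·F0 = F0, X_k·X_l = X_{kl}, X_k·F_r = F_{k⁻¹r}; F_q·T = L, F_q·L = T, F_q·R = F0, F_q·F0 = R, F_q·X_l = F_{ql}, F_q·F_r = X_{q⁻¹r}. Then this multiplication is associative, i.e. (a·b)·c = a·(b·c) for all a, b, c in BP. -/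

import Mathlib

/-!
Multiplication is `ℤ`-bilinear, so associativity reduces to triples of basis elements, where it
is a finite check against the table. On the invertible elements the table is the group law of
`(ℤ/p)ˣ ⋊ ℤ/2`, with `F 1` acting on `X k` by inversion, so those cases come down to identities
in the abelian group `(ℤ/p)ˣ`; the remaining cases are bookkeeping of powers of `p`.
-/

open Finsupp

/-- Basis labels for the Brauer-Picard ring of `Vec(ℤ/p)`: the four
non-invertible indecomposable bimodules `T, L, R, F0`, and the invertible ones
`X k`, `F q` for `k, q ∈ (ℤ/p)ˣ`. -/
inductive BPBasis (p : ℕ) where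
  | T | L | R | F0
  | X (k : (ZMod p)ˣ)
  | F (q : (ZMod p)ˣ)
  deriving DecidableEq

/-- The Brauer-Picard ring of `Vec(ℤ/p)` as a free `ℤ`-module on `BPBasis p`. -/
abbrev BP (p : ℕ) := BPBasis p →₀ ℤ

namespace BPBasis

/-- The Brauer-Picard multiplication table for `Vec(ℤ/p)` on basis elements. -/
noncomputable def mulB {p : ℕ} : BPBasis p → BPBasis p → BP p
  | T, T => single T (p : ℤ)
  | T, L => single T 1
  | T, R => single R (p : ℤ)
  | T, F0 => single R 1
  | T, X _ => single T 1
  | T, F _ => single R 1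
  | L, T => single L (p : ℤ)
  | L, L => single L 1
  | L, R => single F0 (p : ℤ)
  | L, F0 => single F0 1
  | L, X _ => single L 1
  | L, F _ => single F0 1
  | R, T => single T 1
  | R, L => single T (p : ℤ)
  | R, R => single R 1
  | R, F0 => single R (p : ℤ)
  | R, X _ => single R 1
  | R, F _ => single T 1
  | F0, T => single L 1
  | F0, L => single L (p : ℤ)
  | F0, R => single F0 1
  | F0, F0 => single F0 (p : ℤ)
  | F0, X _ => single F0 1
  | F0, F _ => single L 1
  | X _, T => single T 1
  | X _, L => single L 1
  | X _, R => single R 1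
  | X _, F0 => single F0 1
  | X k, X l => single (X (k * l)) 1
  | X k, F r => single (F (k⁻¹ * r)) 1
  | F _, T => single L 1
  | F _, L => single T 1
  | F _, R => single F0 1
  | F _, F0 => single R 1
  | F q, X l => single (F (q * l)) 1
  | F q, F r => single (X (q⁻¹ * r)) 1

end BPBasis

/-- The `ℤ`-bilinear extension of the Brauer-Picard multiplication table. -/
noncomputable def bpMul {p : ℕ} (a b : BP p) : BP p :=
  a.sum fun i m => b.sum fun j n => (m * n) • BPBasis.mulB i j

section

variable {p : ℕ}

@[simp]
lemma bpMul_zero_left (b : BP p) : bpMul 0 b = 0 := by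
  simp [bpMul]

@[simp]
lemma bpMul_zero_right (a : BP p) : bpMul a 0 = 0 := by
  simp [bpMul]

lemma bpMul_add_left (a a' b : BP p) :
    bpMul (a + a') b = bpMul a b + bpMul a' b :=
  sum_add_index' (fun _ => by simp) fun _ m m' => by simp [add_mul, add_smul, sum_add]

lemma bpMul_add_right (a b b' : BP p) :
    bpMul a (b + b') = bpMul a b + bpMul a b' := by
  rw [bpMul, bpMul, bpMul, ← sum_add]
  refine sum_congr fun i _ => sum_add_index' (fun _ => by simp) fun _ n n' => ?_
  rw [mul_add, add_smul]

lemma bpMul_single_single (i j : BPBasis p) (m n : ℤ) :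
    bpMul (single i m) (single j n) = (m * n) • BPBasis.mulB i j := by
  simp [bpMul]

lemma bpMul_assoc_single (i j k : BPBasis p) (m n l : ℤ) :
    bpMul (bpMul (single i m) (single j n)) (single k l)
      = bpMul (single i m) (bpMul (single j n) (single k l)) := by
  cases i <;> cases j <;> cases k <;>
    simp only [bpMul_single_single, BPBasis.mulB, smul_single, smul_eq_mul] <;>
    congr 1 <;> simp only [mul_inv_rev, inv_inv, mul_assoc, mul_left_comm, mul_comm]

end

theorem bpMul_assoc_general (p : ℕ) (a b c : BP p) :
    bpMul (bpMul a b) c = bpMul a (bpMul b c) := by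
  induction a using Finsupp.induction_linear with
  | zero => simp
  | add a a' ha ha' => simp only [bpMul_add_left, ha, ha']
  | single i m =>
  induction b using Finsupp.induction_linear with
  | zero => simp
  | add b b' hb hb' => simp only [bpMul_add_left, bpMul_add_right, hb, hb']
  | single j n =>
  induction c using Finsupp.induction_linear with
  | zero => simp
  | add c c' hc hc' => simp only [bpMul_add_right, hc, hc']
  | single k l => exact bpMul_assoc_single i j k m n l

/-- The Brauer-Picard multiplication of `Vec(ℤ/p)` is associative. -/
theorem bpMul_assoc (p : ℕ) (hp : p.Prime) (a b c : BP p) :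
    bpMul (bpMul a b) c = bpMul a (bpMul b c) :=
  bpMul_assoc_general p a b c
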